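/- Let (Ω, μ) be a measure space, let W be a subspace of the space of measurable K-valued functions on Ω (K = ℝ or ℂ), let V be a vector space over K, and let A : W → V be a linear map. Suppose v ∈ V can be written as v = A f for some f ∈ W satisfying μ(supp f) < (1/2) Spark(A). Then f is the unique minimizer of μ(supp ·) among all solutions of the equation A g = v: for every g ∈ W with A g = v and g ≠ f one has μ(supp f) < μ(supp g). -/

import Mathlib

open MeasureTheory ENNReal

/-- The spark of a linear map `A : W → V`, where `W` is a subspace of the measurable
`K`-valued functions on a measure space `(Ω, μ)`:
`Spark(A) = inf { μ(supp f) : f ∈ ker A, f ≠ 0 }` (with `inf ∅ = ∞`). -/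
noncomputable def Spark {Ω K V : Type*} [MeasurableSpace Ω] [RCLike K]
    [AddCommGroup V] [Module K V] (μ : Measure Ω) (W : Submodule K (Ω → K))
    (A : W →ₗ[K] V) : ℝ≥0∞ :=
  sInf {m : ℝ≥0∞ | ∃ f : W, f ∈ LinearMap.ker A ∧ f ≠ 0 ∧
    m = μ (Function.support (f : Ω → K))}

/-! Two solutions of `A g = v` differ by a nonzero kernel element supported on the union of
their supports, so their support measures add up to at least `Spark(A)`; a solution with
support measure below `Spark(A) / 2` therefore beats every other one. -/

theorem measure_support_sub_le {α M : Type*} [MeasurableSpace α] [AddGroup M]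
    (μ : Measure α) (f g : α → M) :
    μ (Function.support (f - g)) ≤ μ (Function.support f) + μ (Function.support g) :=
  (measure_mono (Function.support_binop_subset (· - ·) (sub_zero 0) f g)).trans
    (measure_union_le _ _)

section Spark

variable {Ω K V : Type*} [MeasurableSpace Ω] [RCLike K] [AddCommGroup V] [Module K V]
  {μ : Measure Ω} {W : Submodule K (Ω → K)} {A : W →ₗ[K] V}

theorem Spark_le_measure_support {f : W} (hf : f ∈ LinearMap.ker A) (hf0 : f ≠ 0) :
    Spark μ W A ≤ μ (Function.support (f : Ω → K)) :=
  sInf_le ⟨f, hf, hf0, rfl⟩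

theorem Spark_le_add_of_apply_eq {f g : W} (hfg : A g = A f) (hne : g ≠ f) :
    Spark μ W A ≤ μ (Function.support (g : Ω → K)) + μ (Function.support (f : Ω → K)) :=
  calc Spark μ W A ≤ μ (Function.support ((g - f : W) : Ω → K)) :=
        Spark_le_measure_support (by rw [LinearMap.mem_ker, map_sub, hfg, sub_self])
          (sub_ne_zero.mpr hne)
    _ ≤ _ := measure_support_sub_le μ (g : Ω → K) f

end Spark

theorem continuous_donoho_elad_spark_sparsity_two_general
    {Ω K V : Type*} [MeasurableSpace Ω] [RCLike K]
    [AddCommGroup V] [Module K V] (μ : Measure Ω) (W : Submodule K (Ω → K))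
    (A : W →ₗ[K] V)
    (v : V) (f : W) (hf : A f = v)
    (hsupp : μ (Function.support (f : Ω → K)) < Spark μ W A / 2) :
    ∀ g : W, A g = v → g ≠ f →
      μ (Function.support (f : Ω → K)) < μ (Function.support (g : Ω → K)) := by
  intro g hg hne
  by_contra! hle
  have hspark : Spark μ W A ≤ 2 * μ (Function.support (f : Ω → K)) :=
    calc Spark μ W A
        ≤ μ (Function.support (g : Ω → K)) + μ (Function.support (f : Ω → K)) :=
          Spark_le_add_of_apply_eq (hg.trans hf.symm) hne
      _ ≤ 2 * μ (Function.support (f : Ω → K)) := by rw [two_mul]; gcongr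
  rw [ENNReal.lt_div_iff_mul_lt (by norm_num) (by norm_num), mul_comm] at hsupp
  exact hspark.not_gt hsupp

/-- Continuous Donoho–Elad spark sparsity theorem, part (ii): if `v = A f` with
`μ(supp f) < (1/2) Spark(A)`, then `f` is the unique sparsest solution of `A g = v`. -/
theorem continuous_donoho_elad_spark_sparsity_two
    {Ω K V : Type*} [MeasurableSpace Ω] [RCLike K]
    [AddCommGroup V] [Module K V] (μ : Measure Ω) (W : Submodule K (Ω → K))
    (hW : ∀ f ∈ W, Measurable f) (A : W →ₗ[K] V)
    (v : V) (f : W) (hf : A f = v)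
    (hsupp : μ (Function.support (f : Ω → K)) < Spark μ W A / 2) :
    ∀ g : W, A g = v → g ≠ f →
      μ (Function.support (f : Ω → K)) < μ (Function.support (g : Ω → K)) :=
  continuous_donoho_elad_spark_sparsity_two_general μ W A v f hf hsupp
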